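/- arXiv:2411.18981 — 2 statements merged into one kernel-verified Lean document; each statement's English description precedes it below -/
import Mathlib

section
/- Let F be a field and let G = (V, E) be a finite simple undirected graph with V = {1,…,n}, n ≥ 2, and maximum degree Δ. For each vertex u, fix an injection n_u from the neighborhood of u into {1,…,Δ}. Define the n-variate polynomial f_G := Σ_{v=1}^n x_v^{Δ+1} + Σ_{{u,v}∈E} x_u^{n_u(v)} · x_v^{n_v(u)}, which has individual degree Δ+1. Then for every partition {1,…,n} = A ⊔ B with A and B both nonempty, the rank of the Nisan matrix M_A(f_G) equals 2 + c_G(A,B), where c_G(A,B) is the number of edges of G with one endpoint in A and the other in B. -/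
open MvPolynomial

/-- `f` has individual degree at most `d`: every variable appears with exponent at most `d`
in every monomial of `f`. -/
def IndivDegLE {F : Type*} [CommSemiring F] {V : Type*} (f : MvPolynomial V F) (d : ℕ) : Prop :=
  ∀ m ∈ f.support, ∀ i : V, m i ≤ d

/-- The Nisan matrix of `f` with respect to the set `T` of variables, where exponents
range over `{0, …, d}`. -/
noncomputable def nisanMatrix {F : Type*} [Field F] {V : Type*} [Fintype V] [DecidableEq V]
    (d : ℕ) (f : MvPolynomial V F) (T : Finset V) :
    Matrix ({x : V // x ∈ T} → Fin (d + 1)) ({x : V // x ∉ T} → Fin (d + 1)) F :=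
  Matrix.of fun a b => MvPolynomial.coeff
    (Finsupp.equivFunOnFinite.symm fun i =>
      if h : i ∈ T then (a ⟨i, h⟩ : ℕ) else (b ⟨i, h⟩ : ℕ)) f

/-- Ordered product `L 0 * L 1 * ⋯ * L (k-1)` of matrices of varying dimensions. -/
def matProdUpTo {R : Type*} [CommSemiring R] (ws : ℕ → ℕ)
    (L : (i : ℕ) → Matrix (Fin (ws i)) (Fin (ws (i + 1))) R) :
    (k : ℕ) → Matrix (Fin (ws 0)) (Fin (ws k)) R
  | 0 => 1
  | k + 1 => matProdUpTo ws L k * L k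

/-- `f` has an ROABP of width `w` in the order `σ`: there are widths
`ws 0 = ws n = 1`, `1 ≤ ws i ≤ w` for `0 < i < n`, and coefficient matrices
`A i j ∈ F^{ws i × ws (i+1)}` such that `f` is the `(1,1)` entry of the ordered product
of the layer matrices `Σ_j A i j • x_{σ(i)}^j`. -/
def HasROABP {F : Type*} [Field F] {n : ℕ} (d : ℕ) (f : MvPolynomial (Fin n) F)
    (σ : Equiv.Perm (Fin n)) (w : ℕ) : Prop :=
  ∃ (ws : ℕ → ℕ) (A : (i : Fin n) → Fin (d + 1) →
      Matrix (Fin (ws i.val)) (Fin (ws (i.val + 1))) F),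
    ws 0 = 1 ∧ ws n = 1 ∧ (∀ i : ℕ, 0 < i → i < n → 1 ≤ ws i ∧ ws i ≤ w) ∧
    ∀ (p : Fin (ws 0)) (q : Fin (ws n)),
      f = matProdUpTo ws
        (fun i => if h : i < n then
            Matrix.of (fun p' q' => ∑ j : Fin (d + 1),
              MvPolynomial.C (A ⟨i, h⟩ j p' q') * MvPolynomial.X (σ ⟨i, h⟩) ^ (j : ℕ))
          else 0) n p q

/-- `T` is a prefix of the order `σ`, i.e. `T = {σ(1), …, σ(i)}` for some `i ∈ {1, …, n}`
(0-indexed: the image under `σ` of the first `i` positions). -/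
def IsPrefixOf {n : ℕ} (σ : Equiv.Perm (Fin n)) (T : Finset (Fin n)) : Prop :=
  ∃ i : ℕ, 1 ≤ i ∧ i ≤ n ∧
    T = (Finset.univ.filter fun l : Fin n => (l : ℕ) < i).image (fun l => σ l)

/-- The `(1,1)` entry of the ordered product of the layer matrices of a width-`w` ROABP
in the order `σ`, with coefficient matrices `A`. -/
noncomputable def roabpPoly {F : Type*} [Field F] {n : ℕ} (d w : ℕ) (hw : 0 < w)
    (σ : Equiv.Perm (Fin n)) (A : Fin n → Fin (d + 1) → Matrix (Fin w) (Fin w) F) :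
    MvPolynomial (Fin n) F :=
  (((List.finRange n).map fun i => Matrix.of fun p q =>
      ∑ j : Fin (d + 1), MvPolynomial.C (A i j p q) * MvPolynomial.X (σ i) ^ (j : ℕ)).prod)
    ⟨0, hw⟩ ⟨0, hw⟩

/-!
The Nisan matrix of a polynomial is the sum, over its monomials, of matrices with a single
nonzero entry. For `f_G` the monomials in the variables of `A` alone (the powers `x_v^{Δ+1}`,
`v ∈ A`, and the edges inside `A`) all lie in the column of the zero exponent vector, those in
the variables of `Aᶜ` alone in the row of the zero exponent vector, and each crossing edge
contributes one more entry, so the rank is at most `2 + c_G(A, Aᶜ)`.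

Conversely, pick `v₀ ∈ A` and `w₀ ∉ A`. The rows `x_{v₀}^{Δ+1}`, `1`, `x_a^{n_a(b)}` and the
columns `1`, `x_{w₀}^{Δ+1}`, `x_b^{n_b(a)}`, for the crossing edges `ab` with `a ∈ A`, cut out an
identity submatrix: the labels lie in `[1, Δ]`, so they never meet the exponents `0` and `Δ + 1`,
and `x_a^{n_a(b)} x_{b'}^{n_{b'}(a')}` is a monomial of `f_G` only if `b = b'` and `a = a'`, by
injectivity of the labels at `a` and at `b'`.
-/

open Finset

namespace Matrix

variable {K : Type*} [Field K] {m n ι : Type*} [Fintype n]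

theorem rank_add_le (A B : Matrix m n K) : (A + B).rank ≤ A.rank + B.rank := by
  rw [rank, rank, rank, mulVecLin_add]
  refine (Submodule.finrank_mono ?_).trans (Submodule.finrank_add_le_finrank_add_finrank _ _)
  rintro x ⟨y, rfl⟩
  exact Submodule.mem_sup.2 ⟨_, ⟨y, rfl⟩, _, ⟨y, rfl⟩, rfl⟩

theorem rank_sum_le (s : Finset ι) (M : ι → Matrix m n K) :
    (∑ i ∈ s, M i).rank ≤ ∑ i ∈ s, (M i).rank :=
  Finset.sum_hom_rel (r := fun A k => rank A ≤ k) rank_zero.le fun _ _ _ h =>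
    (rank_add_le _ _).trans (by gcongr)

theorem rank_le_one_of_apply_eq_zero_of_ne_col [DecidableEq n] {A : Matrix m n K} (j₀ : n)
    (h : ∀ i j, j ≠ j₀ → A i j = 0) : A.rank ≤ 1 := by
  have hA : A = vecMulVec (fun i => A i j₀) (Pi.single j₀ 1) := by
    ext i j
    by_cases hj : j = j₀
    · simp [hj, vecMulVec_apply]
    · simp [hj, vecMulVec_apply, h i j hj]
  rw [hA]
  exact rank_vecMulVec_le _ _

theorem rank_le_one_of_apply_eq_zero_of_ne_row [Fintype m] [DecidableEq m] {A : Matrix m n K}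
    (i₀ : m) (h : ∀ i j, i ≠ i₀ → A i j = 0) : A.rank ≤ 1 := by
  rw [← rank_transpose]
  exact rank_le_one_of_apply_eq_zero_of_ne_col i₀ fun j i hi => h i j hi

theorem card_le_rank_of_submatrix_eq_one [Fintype ι] [DecidableEq ι] {A : Matrix m n K}
    {r : ι → m} {c : ι → n} (h : A.submatrix r c = 1) : Fintype.card ι ≤ A.rank := by
  simpa [h] using rank_submatrix_le A r c

end Matrix

namespace Finsupp

variable {α : Type*}

theorem single_eq_single_add_single_iff {u v w : α} {e k l : ℕ} (hvw : v ≠ w) (he : e ≠ 0) :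
    single u e = single v k + single w l ↔ (u = v ∧ k = e ∧ l = 0) ∨ (u = w ∧ k = 0 ∧ l = e) := by
  classical
  constructor
  · intro h
    have hu := DFunLike.congr_fun h u
    have hv := DFunLike.congr_fun h v
    have hw := DFunLike.congr_fun h w
    simp only [Finsupp.add_apply, single_apply] at hu hv hw
    grind
  · rintro (⟨rfl, rfl, rfl⟩ | ⟨rfl, rfl, rfl⟩) <;> simp

theorem single_add_single_eq_single_add_single_iff {u u' v w : α} {p q k l : ℕ} (huu' : u ≠ u')
    (hvw : v ≠ w) (hp : p ≠ 0) (hq : q ≠ 0) :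
    single u p + single u' q = single v k + single w l ↔
      (u = v ∧ u' = w ∧ k = p ∧ l = q) ∨ (u = w ∧ u' = v ∧ k = q ∧ l = p) := by
  classical
  constructor
  · intro h
    have hu := DFunLike.congr_fun h u
    have hu' := DFunLike.congr_fun h u'
    have hv := DFunLike.congr_fun h v
    have hw := DFunLike.congr_fun h w
    simp only [Finsupp.add_apply, single_apply] at hu hu' hv hw
    grind
  · rintro (⟨rfl, rfl, rfl, rfl⟩ | ⟨rfl, rfl, rfl, rfl⟩)
    · rfl
    · exact add_comm _ _

end Finsupp

section NisanMatrix

variable {F V : Type*} [Field F] {d : ℕ} {T : Finset V}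

/-- Exponents above `d` are reduced modulo `d + 1`. -/
def rowPart (T : Finset V) (d : ℕ) (m : V →₀ ℕ) : {x // x ∈ T} → Fin (d + 1) :=
  fun x => Fin.ofNat (d + 1) (m x)

def colPart (T : Finset V) (d : ℕ) (m : V →₀ ℕ) : {x // x ∉ T} → Fin (d + 1) :=
  fun x => Fin.ofNat (d + 1) (m x)

theorem rowPart_eq_zero {m : V →₀ ℕ} (hm : ∀ i ∈ T, m i = 0) : rowPart T d m = 0 := by
  funext x
  simp [rowPart, hm x x.2]

theorem colPart_eq_zero {m : V →₀ ℕ} (hm : ∀ i ∉ T, m i = 0) : colPart T d m = 0 := by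
  funext x
  simp [colPart, hm x x.2]

section Finite

variable [Fintype V] [DecidableEq V]

noncomputable def nisanMonomial (T : Finset V) (a : {x // x ∈ T} → Fin (d + 1))
    (b : {x // x ∉ T} → Fin (d + 1)) : V →₀ ℕ :=
  Finsupp.equivFunOnFinite.symm fun i => if h : i ∈ T then (a ⟨i, h⟩ : ℕ) else (b ⟨i, h⟩ : ℕ)

theorem nisanMatrix_apply (f : MvPolynomial V F) (T : Finset V) (a b) :
    nisanMatrix d f T a b = coeff (nisanMonomial T a b) f :=
  rfl

theorem nisanMonomial_apply_of_mem {a : {x // x ∈ T} → Fin (d + 1)}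
    {b : {x // x ∉ T} → Fin (d + 1)} {i : V} (hi : i ∈ T) :
    nisanMonomial T a b i = a ⟨i, hi⟩ := by
  simp [nisanMonomial, hi]

theorem nisanMonomial_apply_of_notMem {a : {x // x ∈ T} → Fin (d + 1)}
    {b : {x // x ∉ T} → Fin (d + 1)} {i : V} (hi : i ∉ T) :
    nisanMonomial T a b i = b ⟨i, hi⟩ := by
  simp [nisanMonomial, hi]

theorem rowPart_nisanMonomial (a : {x // x ∈ T} → Fin (d + 1)) (b : {x // x ∉ T} → Fin (d + 1)) :
    rowPart T d (nisanMonomial T a b) = a := by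
  funext x
  simp [rowPart, nisanMonomial_apply_of_mem x.2]

theorem colPart_nisanMonomial (a : {x // x ∈ T} → Fin (d + 1)) (b : {x // x ∉ T} → Fin (d + 1)) :
    colPart T d (nisanMonomial T a b) = b := by
  funext x
  simp [colPart, nisanMonomial_apply_of_notMem x.2]

theorem nisanMonomial_rowPart_colPart {m m' : V →₀ ℕ} (hm : ∀ i ∉ T, m i = 0)
    (hm' : ∀ i ∈ T, m' i = 0) (hmd : ∀ i, m i ≤ d) (hm'd : ∀ i, m' i ≤ d) :
    nisanMonomial T (rowPart T d m) (colPart T d m') = m + m' := by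
  ext i
  by_cases hi : i ∈ T
  · simp [nisanMonomial_apply_of_mem hi, rowPart, hm' i hi,
      Nat.mod_eq_of_lt (Nat.lt_succ_of_le (hmd i))]
  · simp [nisanMonomial_apply_of_notMem hi, colPart, hm i hi,
      Nat.mod_eq_of_lt (Nat.lt_succ_of_le (hm'd i))]

theorem nisanMatrix_rowPart_single_colPart_single (f : MvPolynomial V F) {v w : V} (hv : v ∈ T)
    (hw : w ∉ T) {k l : ℕ} (hk : k ≤ d) (hl : l ≤ d) :
    nisanMatrix d f T (rowPart T d (Finsupp.single v k)) (colPart T d (Finsupp.single w l)) =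
      coeff (Finsupp.single v k + Finsupp.single w l) f := by
  rw [nisanMatrix_apply, nisanMonomial_rowPart_colPart]
  · exact fun i hi => Finsupp.single_eq_of_ne (ne_of_mem_of_not_mem hv hi).symm
  · exact fun i hi => Finsupp.single_eq_of_ne (ne_of_mem_of_not_mem hi hw)
  all_goals
    intro i
    rw [Finsupp.single_apply]
    split <;> omega

theorem nisanMatrix_sum {ι : Type*} (s : Finset ι) (f : ι → MvPolynomial V F) :
    nisanMatrix d (∑ i ∈ s, f i) T = ∑ i ∈ s, nisanMatrix d (f i) T := by
  ext a b
  simp [nisanMatrix_apply, Matrix.sum_apply, coeff_sum]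

theorem nisanMatrix_monomial_apply_of_ne_rowPart {m : V →₀ ℕ} {c : F} {a b}
    (ha : a ≠ rowPart T d m) : nisanMatrix d (monomial m c) T a b = 0 := by
  rw [nisanMatrix_apply, coeff_monomial, if_neg]
  rintro rfl
  exact ha (rowPart_nisanMonomial a b).symm

theorem nisanMatrix_monomial_apply_of_ne_colPart {m : V →₀ ℕ} {c : F} {a b}
    (hb : b ≠ colPart T d m) : nisanMatrix d (monomial m c) T a b = 0 := by
  rw [nisanMatrix_apply, coeff_monomial, if_neg]
  rintro rfl
  exact hb (colPart_nisanMonomial a b).symm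

def mixedSupport (T : Finset V) (f : MvPolynomial V F) : Finset (V →₀ ℕ) :=
  f.support.filter fun m => (∃ i ∈ T, m i ≠ 0) ∧ ∃ i ∉ T, m i ≠ 0

theorem rank_nisanMatrix_le (f : MvPolynomial V F) (T : Finset V) :
    (nisanMatrix d f T).rank ≤ 2 + #(mixedSupport T f) := by
  set N := fun m => nisanMatrix d (monomial m (coeff m f)) T
  set inT := f.support.filter fun m => ∀ i ∉ T, m i = 0
  set outT := (f.support.filter fun m => ¬∀ i ∉ T, m i = 0).filter fun m => ∀ i ∈ T, m i = 0
  have hsplit : nisanMatrix d f T =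
      ∑ m ∈ inT, N m + ∑ m ∈ outT, N m + ∑ m ∈ mixedSupport T f, N m := by
    have hmixed : (f.support.filter fun m => ¬∀ i ∉ T, m i = 0).filter
        (fun m => ¬∀ i ∈ T, m i = 0) = mixedSupport T f := by
      ext m
      simp only [mixedSupport, mem_filter, not_forall, ne_eq]
      tauto
    conv_lhs => rw [f.as_sum, nisanMatrix_sum,
      ← sum_filter_add_sum_filter_not f.support (fun m => ∀ i ∉ T, m i = 0),
      ← sum_filter_add_sum_filter_not (f.support.filter fun m => ¬∀ i ∉ T, m i = 0)
        (fun m => ∀ i ∈ T, m i = 0), hmixed]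
    rw [add_assoc]
  have hinT : (∑ m ∈ inT, N m).rank ≤ 1 :=
    Matrix.rank_le_one_of_apply_eq_zero_of_ne_col 0 fun a b hb => by
      rw [Matrix.sum_apply]
      refine sum_eq_zero fun m hm => nisanMatrix_monomial_apply_of_ne_colPart ?_
      rwa [colPart_eq_zero (mem_filter.1 hm).2]
  have houtT : (∑ m ∈ outT, N m).rank ≤ 1 :=
    Matrix.rank_le_one_of_apply_eq_zero_of_ne_row 0 fun a b ha => by
      rw [Matrix.sum_apply]
      refine sum_eq_zero fun m hm => nisanMatrix_monomial_apply_of_ne_rowPart ?_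
      rwa [rowPart_eq_zero (mem_filter.1 hm).2]
  have hmixed : (∑ m ∈ mixedSupport T f, N m).rank ≤ #(mixedSupport T f) := by
    refine (Matrix.rank_sum_le _ _).trans ?_
    rw [card_eq_sum_ones]
    exact sum_le_sum fun m _ => Matrix.rank_le_one_of_apply_eq_zero_of_ne_col (colPart T d m)
      fun a b hb => nisanMatrix_monomial_apply_of_ne_colPart hb
  rw [hsplit]
  calc _ ≤ (∑ m ∈ inT, N m + ∑ m ∈ outT, N m).rank + (∑ m ∈ mixedSupport T f, N m).rank :=
        Matrix.rank_add_le _ _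
    _ ≤ (∑ m ∈ inT, N m).rank + (∑ m ∈ outT, N m).rank + #(mixedSupport T f) := by
        gcongr
        exact Matrix.rank_add_le _ _
    _ ≤ 2 + #(mixedSupport T f) := by omega

end Finite

end NisanMatrix

noncomputable def edgeMonomial {V : Type*} (nb : V → V → ℕ) (u v : V) : V →₀ ℕ :=
  Finsupp.single u (nb u v) + Finsupp.single v (nb v u)

theorem edgeMonomial_comm {V : Type*} (nb : V → V → ℕ) (u v : V) :
    edgeMonomial nb v u = edgeMonomial nb u v :=
  add_comm _ _

theorem eq_or_eq_of_edgeMonomial_apply_ne_zero {V : Type*} {nb : V → V → ℕ} {u v i : V}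
    (h : edgeMonomial nb u v i ≠ 0) : i = u ∨ i = v := by
  by_contra! hi
  simp [edgeMonomial, Ne.symm hi.1, Ne.symm hi.2] at h

section GraphPolynomial

variable {F V : Type*} [Field F] [Fintype V] [LinearOrder V] (G : SimpleGraph V)
  [DecidableRel G.Adj] (nb : V → V → ℕ) (Δ : ℕ)

noncomputable def graphPoly : MvPolynomial V F :=
  (∑ v, X v ^ (Δ + 1)) + ∑ u, ∑ v, if G.Adj u v ∧ u < v then X u ^ nb u v * X v ^ nb v u else 0

def orderedEdges : Finset (V × V) :=
  univ.filter fun p => G.Adj p.1 p.2 ∧ p.1 < p.2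

noncomputable def graphMonomials : Finset (V →₀ ℕ) :=
  univ.image (fun v => Finsupp.single v (Δ + 1)) ∪
    (orderedEdges G).image fun p => edgeMonomial nb p.1 p.2

def crossingPairs (A : Finset V) : Finset (V × V) :=
  univ.filter fun p => p.1 ∈ A ∧ p.2 ∉ A ∧ G.Adj p.1 p.2

theorem card_filter_crossing_eq_card_crossingPairs (A : Finset V) :
    #(univ.filter fun p : V × V => G.Adj p.1 p.2 ∧ p.1 < p.2 ∧ ¬(p.1 ∈ A ↔ p.2 ∈ A)) =
      #(crossingPairs G A) := by
  refine card_nbij' (fun p => if p.1 ∈ A then p else p.swap)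
    (fun p => if p.1 < p.2 then p else p.swap) ?_ ?_ ?_ ?_
  all_goals
    intro p hp
    simp only [crossingPairs, coe_filter, mem_univ, true_and, Set.mem_ofPred_eq] at hp ⊢
    split_ifs <;> grind [SimpleGraph.Adj.symm, Prod.fst_swap, Prod.snd_swap, Prod.swap_swap]

variable {G nb Δ}

theorem graphPoly_eq_sum_monomial (hnb : ∀ u v, G.Adj u v → 0 < nb u v) :
    graphPoly G nb Δ = ∑ m ∈ graphMonomials G nb Δ, monomial m (1 : F) := by
  have hdisj : Disjoint (univ.image fun v => Finsupp.single v (Δ + 1))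
      ((orderedEdges G).image fun p => edgeMonomial nb p.1 p.2) := by
    simp only [disjoint_left, mem_image, mem_univ, true_and, not_exists, not_and]
    rintro _ ⟨w, rfl⟩ ⟨u, v⟩ huv h
    obtain ⟨-, hadj, -⟩ := mem_filter.1 huv
    dsimp only at h hadj
    rw [eq_comm, edgeMonomial, Finsupp.single_eq_single_add_single_iff hadj.ne (by omega)] at h
    have := hnb u v hadj
    have := hnb v u hadj.symm
    rcases h with ⟨-, -, h⟩ | ⟨-, h, -⟩ <;> omega
  have hinj : Set.InjOn (fun p : V × V => edgeMonomial nb p.1 p.2) (orderedEdges G) := by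
    rintro ⟨u, v⟩ huv ⟨u', v'⟩ huv' h
    simp only [orderedEdges, coe_filter, mem_univ, true_and, Set.mem_ofPred_eq] at huv huv'
    simp only [edgeMonomial] at h
    rw [Finsupp.single_add_single_eq_single_add_single_iff huv.1.ne
      huv'.1.ne (hnb _ _ huv.1).ne' (hnb _ _ huv.1.symm).ne'] at h
    rcases h with ⟨rfl, rfl, -⟩ | ⟨rfl, rfl, -⟩
    · rfl
    · exact absurd huv.2 huv'.2.asymm
  rw [graphMonomials, sum_union hdisj, sum_image (fun _ _ _ _ h => Finsupp.single_left_injective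
    (Nat.succ_ne_zero Δ) h), sum_image hinj, graphPoly, orderedEdges, sum_filter,
    ← univ_product_univ, sum_product]
  simp only [X_pow_eq_monomial, monomial_mul, one_mul, edgeMonomial]

theorem coeff_graphPoly (hnb : ∀ u v, G.Adj u v → 0 < nb u v) (m : V →₀ ℕ) :
    coeff m (graphPoly G nb Δ : MvPolynomial V F) =
      if m ∈ graphMonomials G nb Δ then 1 else 0 := by
  simp [graphPoly_eq_sum_monomial hnb, coeff_sum, coeff_monomial]

theorem single_add_single_mem_graphMonomials_iff (hnb : ∀ u v, G.Adj u v → 0 < nb u v)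
    {v w : V} (hvw : v ≠ w) {k l : ℕ} :
    Finsupp.single v k + Finsupp.single w l ∈ graphMonomials G nb Δ ↔
      (k = Δ + 1 ∧ l = 0) ∨ (k = 0 ∧ l = Δ + 1) ∨ (G.Adj v w ∧ k = nb v w ∧ l = nb w v) := by
  have hpow : (∃ u, Finsupp.single u (Δ + 1) = Finsupp.single v k + Finsupp.single w l) ↔
      (k = Δ + 1 ∧ l = 0) ∨ (k = 0 ∧ l = Δ + 1) := by
    simp only [Finsupp.single_eq_single_add_single_iff hvw (Nat.succ_ne_zero Δ)]
    grind
  have hedge : (∃ p ∈ orderedEdges G, edgeMonomial nb p.1 p.2 =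
      Finsupp.single v k + Finsupp.single w l) ↔ G.Adj v w ∧ k = nb v w ∧ l = nb w v := by
    constructor
    · rintro ⟨⟨a, b⟩, hab, h⟩
      obtain ⟨hadj, -⟩ := (mem_filter.1 hab).2
      rw [edgeMonomial, Finsupp.single_add_single_eq_single_add_single_iff hadj.ne hvw
        (hnb _ _ hadj).ne' (hnb _ _ hadj.symm).ne'] at h
      rcases h with ⟨rfl, rfl, rfl, rfl⟩ | ⟨rfl, rfl, rfl, rfl⟩
      · exact ⟨hadj, rfl, rfl⟩
      · exact ⟨hadj.symm, rfl, rfl⟩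
    · rintro ⟨hadj, rfl, rfl⟩
      rcases hvw.lt_or_gt with h | h
      · exact ⟨(v, w), mem_filter.2 ⟨mem_univ _, hadj, h⟩, rfl⟩
      · exact ⟨(w, v), mem_filter.2 ⟨mem_univ _, hadj.symm, h⟩, edgeMonomial_comm nb v w⟩
  simp only [graphMonomials, mem_union, mem_image, mem_univ, true_and]
  rw [hpow, hedge, or_assoc]

theorem mixedSupport_graphPoly_subset (hnb : ∀ u v, G.Adj u v → 0 < nb u v) (A : Finset V) :
    mixedSupport A (graphPoly G nb Δ : MvPolynomial V F) ⊆
      (crossingPairs G A).image fun p => edgeMonomial nb p.1 p.2 := by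
  intro m hm
  obtain ⟨hsupp, ⟨i, hi, hmi⟩, ⟨j, hj, hmj⟩⟩ := mem_filter.1 hm
  have hmem : m ∈ graphMonomials G nb Δ := by
    by_contra h
    rw [mem_support_iff, coeff_graphPoly hnb, if_neg h] at hsupp
    exact hsupp rfl
  rcases mem_union.1 hmem with hpow | hedge
  · obtain ⟨u, -, rfl⟩ := mem_image.1 hpow
    rw [Finsupp.single_apply_ne_zero] at hmi hmj
    exact absurd (hmj.1 ▸ hmi.1 ▸ hi) hj
  · obtain ⟨⟨a, b⟩, hab, rfl⟩ := mem_image.1 hedge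
    have hadj := (mem_filter.1 hab).2.1
    rcases eq_or_eq_of_edgeMonomial_apply_ne_zero hmi with rfl | rfl <;>
      rcases eq_or_eq_of_edgeMonomial_apply_ne_zero hmj with rfl | rfl
    · exact absurd hi hj
    · exact mem_image.2 ⟨(i, j), mem_filter.2 ⟨mem_univ _, hi, hj, hadj⟩, rfl⟩
    · exact mem_image.2 ⟨(i, j), mem_filter.2 ⟨mem_univ _, hi, hj, hadj.symm⟩,
        edgeMonomial_comm nb j i⟩
    · exact absurd hi hj

theorem rank_nisanMatrix_graphPoly_le (hnb : ∀ u v, G.Adj u v → 0 < nb u v) (A : Finset V) :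
    (nisanMatrix (Δ + 1) (graphPoly G nb Δ : MvPolynomial V F) A).rank ≤
      2 + #(crossingPairs G A) := by
  refine (rank_nisanMatrix_le _ A).trans (Nat.add_le_add_left ?_ 2)
  exact (card_le_card (mixedSupport_graphPoly_subset hnb A)).trans card_image_le

theorem eq_of_mem_crossingPairs_of_nb_eq
    (hnb_inj : ∀ u v v', G.Adj u v → G.Adj u v' → nb u v = nb u v' → v = v')
    {A : Finset V} {p q : V × V} (hp : p ∈ crossingPairs G A) (hq : q ∈ crossingPairs G A)
    (hadj : G.Adj p.1 q.2) (h₁ : nb p.1 p.2 = nb p.1 q.2) (h₂ : nb q.2 q.1 = nb q.2 p.1) :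
    p = q := by
  simp only [crossingPairs, mem_filter, mem_univ, true_and] at hp hq
  exact Prod.ext (hnb_inj _ _ _ hq.2.2.symm hadj.symm h₂).symm (hnb_inj _ _ _ hp.2.2 hadj h₁)

section IdentitySubmatrix

variable {A : Finset V}

variable (nb Δ) in
/-- The row and column exponents, as pairs (variable, exponent), of the identity submatrix
giving the lower bound. -/
def identityRow (v₀ : V) : Option (Option (crossingPairs G A)) → V × ℕ
  | none => (v₀, Δ + 1)
  | some none => (v₀, 0)
  | some (some p) => (p.1.1, nb p.1.1 p.1.2)

variable (nb Δ) in
def identityCol (w₀ : V) : Option (Option (crossingPairs G A)) → V × ℕ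
  | none => (w₀, 0)
  | some none => (w₀, Δ + 1)
  | some (some p) => (p.1.2, nb p.1.2 p.1.1)

theorem identityRow_mem_le (hnb_range : ∀ u v, G.Adj u v → 1 ≤ nb u v ∧ nb u v ≤ Δ)
    {v₀ : V} (hv₀ : v₀ ∈ A) (i : Option (Option (crossingPairs G A))) :
    (identityRow nb Δ v₀ i).1 ∈ A ∧ (identityRow nb Δ v₀ i).2 ≤ Δ + 1 := by
  rcases i with _ | _ | ⟨p, hp⟩
  · exact ⟨hv₀, le_rfl⟩
  · exact ⟨hv₀, Nat.zero_le _⟩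
  · obtain ⟨-, hpA, -, hadj⟩ := mem_filter.1 hp
    exact ⟨hpA, (hnb_range _ _ hadj).2.trans (Nat.le_succ Δ)⟩

theorem identityCol_notMem_le (hnb_range : ∀ u v, G.Adj u v → 1 ≤ nb u v ∧ nb u v ≤ Δ)
    {w₀ : V} (hw₀ : w₀ ∉ A) (j : Option (Option (crossingPairs G A))) :
    (identityCol nb Δ w₀ j).1 ∉ A ∧ (identityCol nb Δ w₀ j).2 ≤ Δ + 1 := by
  rcases j with _ | _ | ⟨p, hp⟩
  · exact ⟨hw₀, Nat.zero_le _⟩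
  · exact ⟨hw₀, le_rfl⟩
  · obtain ⟨-, -, hpB, hadj⟩ := mem_filter.1 hp
    exact ⟨hpB, (hnb_range _ _ hadj.symm).2.trans (Nat.le_succ Δ)⟩

theorem identity_mem_graphMonomials_iff
    (hnb_range : ∀ u v, G.Adj u v → 1 ≤ nb u v ∧ nb u v ≤ Δ)
    (hnb_inj : ∀ u v v', G.Adj u v → G.Adj u v' → nb u v = nb u v' → v = v')
    {v₀ w₀ : V} (hv₀ : v₀ ∈ A) (hw₀ : w₀ ∉ A) (i j : Option (Option (crossingPairs G A))) :
    Finsupp.single (identityRow nb Δ v₀ i).1 (identityRow nb Δ v₀ i).2 +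
        Finsupp.single (identityCol nb Δ w₀ j).1 (identityCol nb Δ w₀ j).2 ∈
      graphMonomials G nb Δ ↔ i = j := by
  rw [single_add_single_mem_graphMonomials_iff (fun u v h => (hnb_range u v h).1)
    (ne_of_mem_of_not_mem (identityRow_mem_le hnb_range hv₀ i).1
      (identityCol_notMem_le hnb_range hw₀ j).1)]
  have hcross : ∀ p ∈ crossingPairs G A, G.Adj p.1 p.2 := fun p hp => (mem_filter.1 hp).2.2.2
  rcases i with _ | _ | ⟨p, hp⟩ <;> rcases j with _ | _ | ⟨q, hq⟩
  all_goals
    simp only [identityRow, identityCol, reduceCtorEq, Option.some.injEq, Subtype.mk.injEq,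
      iff_false, true_and, and_true, false_and, and_false, false_or, true_or, or_true, not_or,
      not_and]
  · exact fun hadj h => by have := (hnb_range _ _ hadj).2; omega
  · have := (hnb_range _ _ (hcross q hq).symm).1
    exact ⟨by omega, fun hadj h => by have := (hnb_range _ _ hadj).2; omega⟩
  · exact fun hadj h => by have := (hnb_range _ _ hadj).1; omega
  · have := (hnb_range _ _ (hcross q hq).symm).2
    exact ⟨by omega, fun hadj h => by have := (hnb_range _ _ hadj).1; omega⟩
  · have := (hnb_range _ _ (hcross p hp)).2
    exact ⟨by omega, fun hadj _ h => by have := (hnb_range _ _ hadj.symm).1; omega⟩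
  · have := (hnb_range _ _ (hcross p hp)).1
    exact ⟨by omega, fun hadj _ h => by have := (hnb_range _ _ hadj.symm).2; omega⟩
  · have := hnb_range _ _ (hcross p hp)
    have := hnb_range _ _ (hcross q hq).symm
    refine ⟨?_, ?_⟩
    · rintro (⟨h, -⟩ | ⟨h, -⟩ | ⟨hadj, h₁, h₂⟩)
      · omega
      · omega
      · exact eq_of_mem_crossingPairs_of_nb_eq hnb_inj hp hq hadj h₁ h₂
    · rintro rfl
      exact Or.inr (Or.inr ⟨hcross p hp, rfl, rfl⟩)

theorem le_rank_nisanMatrix_graphPoly (hnb_range : ∀ u v, G.Adj u v → 1 ≤ nb u v ∧ nb u v ≤ Δ)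
    (hnb_inj : ∀ u v v', G.Adj u v → G.Adj u v' → nb u v = nb u v' → v = v')
    {v₀ w₀ : V} (hv₀ : v₀ ∈ A) (hw₀ : w₀ ∉ A) :
    2 + #(crossingPairs G A) ≤
      (nisanMatrix (Δ + 1) (graphPoly G nb Δ : MvPolynomial V F) A).rank := by
  have hsub : (nisanMatrix (Δ + 1) (graphPoly G nb Δ : MvPolynomial V F) A).submatrix
      (fun i : Option (Option (crossingPairs G A)) => rowPart A (Δ + 1)
        (Finsupp.single (identityRow nb Δ v₀ i).1 (identityRow nb Δ v₀ i).2))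
      (fun j : Option (Option (crossingPairs G A)) => colPart A (Δ + 1)
        (Finsupp.single (identityCol nb Δ w₀ j).1 (identityCol nb Δ w₀ j).2)) = 1 := by
    ext i j
    obtain ⟨hiA, hik⟩ := identityRow_mem_le hnb_range hv₀ i
    obtain ⟨hjA, hjl⟩ := identityCol_notMem_le hnb_range hw₀ j
    rw [Matrix.submatrix_apply, nisanMatrix_rowPart_single_colPart_single _ hiA hjA hik hjl,
      coeff_graphPoly (fun u v h => (hnb_range u v h).1), Matrix.one_apply]
    exact if_congr (identity_mem_graphMonomials_iff hnb_range hnb_inj hv₀ hw₀ i j) rfl rfl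
  have := Matrix.card_le_rank_of_submatrix_eq_one hsub
  rwa [Fintype.card_option, Fintype.card_option, Fintype.card_coe, add_assoc, add_comm] at this

end IdentitySubmatrix

end GraphPolynomial

theorem nisan_rank_graph_poly_general {F : Type*} [Field F] {n Δ : ℕ}
    (G : SimpleGraph (Fin n)) [DecidableRel G.Adj]
    (nb : Fin n → Fin n → ℕ)
    (hnb_range : ∀ u v, G.Adj u v → 1 ≤ nb u v ∧ nb u v ≤ Δ)
    (hnb_inj : ∀ u v v', G.Adj u v → G.Adj u v' → nb u v = nb u v' → v = v')
    (A : Finset (Fin n)) (hA : A.Nonempty) (hB : Aᶜ.Nonempty) :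
    (nisanMatrix (Δ + 1)
        (((∑ v : Fin n, X v ^ (Δ + 1)) +
          ∑ u : Fin n, ∑ v : Fin n,
            if G.Adj u v ∧ u < v then X u ^ (nb u v) * X v ^ (nb v u) else 0 :
          MvPolynomial (Fin n) F)) A).rank
      = 2 + (Finset.univ.filter fun p : Fin n × Fin n =>
          G.Adj p.1 p.2 ∧ p.1 < p.2 ∧ ¬(p.1 ∈ A ↔ p.2 ∈ A)).card := by
  obtain ⟨v₀, hv₀⟩ := hA
  obtain ⟨w₀, hw₀⟩ := hB
  change (nisanMatrix (Δ + 1) (graphPoly G nb Δ : MvPolynomial (Fin n) F) A).rank = _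
  rw [card_filter_crossing_eq_card_crossingPairs]
  exact le_antisymm (rank_nisanMatrix_graphPoly_le (fun u v h => (hnb_range u v h).1) A)
    (le_rank_nisanMatrix_graphPoly hnb_range hnb_inj hv₀ (mem_compl.1 hw₀))

/-- For a simple graph `G` on `{1, …, n}` with maximum degree `Δ` and injections
`nb u : Nbr(u) ↪ {1, …, Δ}`, the polynomial
`f_G = Σ_v x_v^{Δ+1} + Σ_{{u,v} ∈ E} x_u^{nb u v} x_v^{nb v u}` satisfies: for every nontrivial
partition `A ⊔ Aᶜ`, the rank of its Nisan matrix w.r.t. `A` is `2 + c_G(A, Aᶜ)`, the number of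
crossing edges plus two. -/
theorem nisan_rank_graph_poly {F : Type*} [Field F] {n Δ : ℕ} (hn : 2 ≤ n)
    (G : SimpleGraph (Fin n)) [DecidableRel G.Adj]
    (hdeg : ∀ v, G.degree v ≤ Δ)
    (nb : Fin n → Fin n → ℕ)
    (hnb_range : ∀ u v, G.Adj u v → 1 ≤ nb u v ∧ nb u v ≤ Δ)
    (hnb_inj : ∀ u v v', G.Adj u v → G.Adj u v' → nb u v = nb u v' → v = v')
    (A : Finset (Fin n)) (hA : A.Nonempty) (hB : Aᶜ.Nonempty) :
    (nisanMatrix (Δ + 1)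
        (((∑ v : Fin n, X v ^ (Δ + 1)) +
          ∑ u : Fin n, ∑ v : Fin n,
            if G.Adj u v ∧ u < v then X u ^ (nb u v) * X v ^ (nb v u) else 0 :
          MvPolynomial (Fin n) F)) A).rank
      = 2 + (Finset.univ.filter fun p : Fin n × Fin n =>
          G.Adj p.1 p.2 ∧ p.1 < p.2 ∧ ¬(p.1 ∈ A ↔ p.2 ∈ A)).card :=
  nisan_rank_graph_poly_general G nb hnb_range hnb_inj A hA hB
end

section
/- Let F be a field, S ⊆ F a finite set, f an n-variate polynomial over F of individual degree at most d, T ⊆ {1,…,n} with |T| = k, and w a nonnegative integer; assume S has at least d+1 elements. Draw tuples α_1,…,α_{w+1} ∈ S^k and β_1,…,β_{w+1} ∈ S^{n−k} with all coordinates independent and uniform on S, and let Ê be the (w+1)×(w+1) matrix with Ê[i,j] = f(x_T = α_i, x_{{1,…,n}∖T} = β_j). Then: (1) if rank(M_T(f)) ≤ w, then det(Ê) = 0 with probability 1; and (2) if rank(M_T(f)) > w, then the probability that det(Ê) = 0 is at most n·d·(w+1)²/|S|. -/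
open MvPolynomial

/-!
Substituting `x_T = α` and `x_{V∖T} = β` into the monomial expansion of `f` factors the evaluation
matrix as `Ê = V_α · M_T(f) · V_βᵀ`, where `V_α`, `V_β` hold the values of the monomials of
individual degree `≤ d` at the sample points. Hence `rank Ê ≤ rank M_T(f)`, which gives (1).

When the sample points run over the whole grids `S^T` and `S^{V∖T}`, the factors `V_α`, `V_β`
have full column rank, because a polynomial of individual degree `< |S|` vanishing on a grid is
zero. So the full evaluation matrix has rank `rank M_T(f) > w` and a nonzero `(w+1)`-minor. Thus
`det Ê`, viewed as a polynomial in the coordinates of the samples, is nonzero of total degree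
`≤ (w+1)·n·d`, and Schwartz–Zippel bounds the probability that it vanishes.
-/

open Matrix

namespace MvPolynomial

section IndivDeg

variable {R : Type*} [CommSemiring R] {σ : Type*}

lemma totalDegree_le_of_indivDegLE [Fintype σ] {f : MvPolynomial σ R} {d : ℕ}
    (hf : IndivDegLE f d) : f.totalDegree ≤ Fintype.card σ * d := by
  refine Finset.sup_le fun m hm => ?_
  rw [Finsupp.sum_fintype _ _ fun _ => rfl, ← smul_eq_mul, ← Finset.card_univ,
    ← Finset.sum_const]
  exact Finset.sum_le_sum fun i _ => hf m hm i

noncomputable def finExponent (d : ℕ) (σ : Type*) [Finite σ] : (σ → Fin (d + 1)) ↪ (σ →₀ ℕ) where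
  toFun a := Finsupp.equivFunOnFinite.symm fun i => a i
  inj' _ _ h := _root_.funext fun i => Fin.ext (Finsupp.ext_iff.mp h i)

@[simp]
lemma finExponent_apply {d : ℕ} [Finite σ] (a : σ → Fin (d + 1)) (i : σ) :
    finExponent d σ a i = a i := rfl

lemma eval_eq_sum_finExponent [Fintype σ] [DecidableEq σ] {f : MvPolynomial σ R} {d : ℕ}
    (hf : IndivDegLE f d) (x : σ → R) :
    eval x f = ∑ a : σ → Fin (d + 1), coeff (finExponent d σ a) f * ∏ i, x i ^ (a i : ℕ) := by
  have hsupp : f.support ⊆ Finset.univ.map (finExponent d σ) := fun m hm =>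
    Finset.mem_map.mpr ⟨fun i => ⟨m i, Nat.lt_succ_of_le (hf m hm i)⟩, Finset.mem_univ _,
      Finsupp.ext fun i => rfl⟩
  rw [eval_eq', Finset.sum_subset hsupp fun m _ hm => by rw [notMem_support_iff.mp hm, zero_mul],
    Finset.sum_map]
  rfl

end IndivDeg

lemma totalDegree_det_le {R σ : Type*} [CommRing R] {n : Type*} [Fintype n] [DecidableEq n]
    (M : Matrix n n (MvPolynomial σ R)) {D : ℕ} (hM : ∀ i j, (M i j).totalDegree ≤ D) :
    M.det.totalDegree ≤ Fintype.card n * D := by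
  rw [det_apply]
  refine totalDegree_finsetSum_le fun π _ => (totalDegree_smul_le _ _).trans ?_
  refine (totalDegree_finsetProd _ _).trans ?_
  calc ∑ i, (M (π i) i).totalDegree ≤ ∑ _i : n, D := Finset.sum_le_sum fun i _ => hM (π i) i
    _ = Fintype.card n * D := by simp

lemma schwartz_zippel_totalDegree_fintype {R : Type*} [CommRing R] [IsDomain R] {σ : Type*}
    [Fintype σ] {p : MvPolynomial σ R} (hp : p ≠ 0) (S : Finset R) :
    (Nat.card {x : σ → S // eval (fun i => (x i : R)) p = 0} : ℝ) / Nat.card (σ → S) ≤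
      p.totalDegree / S.card := by
  classical
  let e := Fintype.equivFin σ
  have hq : rename e p ≠ 0 := (map_ne_zero_iff _ (rename_injective e e.injective)).mpr hp
  have hzeros : Nat.card {x : σ → S // eval (fun i => (x i : R)) p = 0} =
      ((Fintype.piFinset fun _ => S).filter fun y => eval y (rename e p) = 0).card := by
    rw [Nat.card_eq_fintype_card, Fintype.card_subtype]
    refine Finset.card_bij' (fun x _ i => x (e.symm i)) (fun y hy s => ⟨y (e s), ?_⟩)
      (fun x hx => ?_) (fun y hy => ?_) (fun x _ => ?_) (fun y _ => ?_)
    · exact Fintype.mem_piFinset.mp (Finset.mem_filter.mp hy).1 _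
    · simpa [eval_rename, Function.comp_def] using hx
    · simpa [eval_rename, Function.comp_def] using (Finset.mem_filter.mp hy).2
    · ext s; simp
    · ext i; simp
  have hsz := (NNRat.cast_le (K := ℝ)).mpr (schwartz_zippel_totalDegree hq S)
  push_cast at hsz
  rw [hzeros, Nat.card_eq_fintype_card, Fintype.card_fun, Fintype.card_coe, Nat.cast_pow]
  exact hsz.trans (div_le_div_of_nonneg_right (by exact_mod_cast totalDegree_rename_le _ _)
    (Nat.cast_nonneg _))

end MvPolynomial

namespace Matrix

variable {K : Type*} [Field K] {l m n : Type*} [Fintype m] [Fintype n]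

lemma det_eq_zero_of_rank_lt [DecidableEq n] {A : Matrix n n K} (h : A.rank < Fintype.card n) :
    A.det = 0 := by
  by_contra hA
  exact h.ne (rank_of_det_ne_zero hA)

lemma rank_mul_eq_right_of_mulVec_injective {A : Matrix l m K} (hA : Function.Injective A.mulVec)
    (B : Matrix m n K) : (A * B).rank = B.rank := by
  rw [rank, rank, mulVecLin_mul, LinearMap.range_comp]
  exact (LinearEquiv.finrank_eq (Submodule.equivMapOfInjective _ hA _)).symm

lemma rank_mul_transpose_eq_left_of_mulVec_injective [Fintype l] {C : Matrix n m K}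
    (hC : Function.Injective C.mulVec) (B : Matrix l m K) : (B * Cᵀ).rank = B.rank := by
  rw [← rank_transpose, transpose_mul, transpose_transpose,
    rank_mul_eq_right_of_mulVec_injective hC, rank_transpose]

lemma exists_linearIndependent_rows_of_le_rank (A : Matrix m n K) {r : ℕ} (h : r ≤ A.rank) :
    ∃ rows : Fin r → m, LinearIndependent K (A ∘ rows) := by
  obtain ⟨ι, rows, -, hspan, hli⟩ := exists_linearIndependent' K A.row
  have : Finite ι := hli.finite
  have := Fintype.ofFinite ι
  have hcard : r ≤ Fintype.card ι := by
    rwa [rank_eq_finrank_span_row, ← hspan, finrank_span_eq_card hli] at h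
  obtain ⟨e⟩ := Function.Embedding.nonempty_of_card_le (α := Fin r) (by simpa using hcard)
  exact ⟨rows ∘ e, hli.comp e e.injective⟩

lemma exists_submatrix_det_ne_zero_of_le_rank (A : Matrix m n K) {r : ℕ} (h : r ≤ A.rank) :
    ∃ (rows : Fin r → m) (cols : Fin r → n), (A.submatrix rows cols).det ≠ 0 := by
  obtain ⟨rows, hrows⟩ := exists_linearIndependent_rows_of_le_rank A h
  have hrank : r ≤ (A.submatrix rows id)ᵀ.rank := by
    rw [rank_transpose]
    exact (hrows.rank_matrix.trans (Fintype.card_fin r)).ge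
  obtain ⟨cols, hcols⟩ := exists_linearIndependent_rows_of_le_rank _ hrank
  exact ⟨rows, cols,
    ((isUnit_iff_isUnit_det _).mp (linearIndependent_cols_iff_isUnit.mp hcols)).ne_zero⟩

end Matrix

def multiVandermonde {R : Type*} [CommSemiring R] {ι τ : Type*} [Fintype τ] (d : ℕ)
    (α : ι → τ → R) : Matrix ι (τ → Fin (d + 1)) R :=
  Matrix.of fun i a => ∏ t, α i t ^ (a t : ℕ)

lemma multiVandermonde_mulVec_injective {R : Type*} [CommRing R] [IsDomain R] {τ : Type*}
    [Fintype τ] [DecidableEq τ] {d : ℕ} (S : Finset R) (hS : d + 1 ≤ S.card) :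
    Function.Injective (multiVandermonde d fun (x : τ → S) t => (x t : R)).mulVec := by
  refine (injective_iff_map_eq_zero (mulVecLin _)).mpr fun v hv => ?_
  let g : MvPolynomial τ R := ∑ a, monomial (finExponent d τ a) (v a)
  have hdeg (t : τ) : g.degreeOf t < S.card := by
    refine (degreeOf_sum_le t _ _).trans_lt (Nat.lt_of_le_of_lt ?_ hS)
    refine Finset.sup_le fun a _ => degreeOf_le_iff.mpr fun m hm => ?_
    rw [Finset.mem_singleton.mp (support_monomial_subset hm)]
    exact Nat.le_of_lt_succ (a t).2
  have hg : g = 0 := by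
    refine eq_zero_of_eval_zero_at_prod_finset g (fun _ => S) hdeg fun x hx => ?_
    have := congrFun hv fun t => ⟨x t, hx t⟩
    simpa [g, mulVec, dotProduct, multiVandermonde, eval_monomial, Finsupp.prod_fintype,
      mul_comm] using this
  funext a
  simpa [g, coeff_sum, coeff_monomial, (finExponent d τ).injective.eq_iff] using
    congrArg (coeff (finExponent d τ a)) hg

section EvalMatrix

variable {F : Type*} [Field F] {V : Type*} [DecidableEq V] {ι κ : Type*}

noncomputable def evalMatrix (f : MvPolynomial V F) (T : Finset V) (α : ι → {x // x ∈ T} → F)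
    (β : κ → {x // x ∉ T} → F) : Matrix ι κ F :=
  Matrix.of fun i j => eval (fun t => if h : t ∈ T then α i ⟨t, h⟩ else β j ⟨t, h⟩) f

lemma evalMatrix_eq_mul_nisanMatrix_mul [Fintype V] {f : MvPolynomial V F} {d : ℕ}
    (hf : IndivDegLE f d) (T : Finset V) (α : ι → {x // x ∈ T} → F) (β : κ → {x // x ∉ T} → F) :
    evalMatrix f T α β =
      multiVandermonde d α * nisanMatrix d f T * (multiVandermonde d β)ᵀ := by
  ext i j
  rw [evalMatrix, of_apply, eval_eq_sum_finExponent hf,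
    ← (Equiv.piEquivPiSubtypeProd (· ∈ T) fun _ => Fin (d + 1)).symm.sum_comp,
    Fintype.sum_prod_type, mul_apply, Finset.sum_comm]
  refine Finset.sum_congr rfl fun b _ => ?_
  rw [mul_apply, Finset.sum_mul]
  refine Finset.sum_congr rfl fun a _ => ?_
  rw [← Fintype.prod_subtype_mul_prod_subtype (· ∈ T)]
  simp only [Equiv.piEquivPiSubtypeProd_symm_apply, multiVandermonde, nisanMatrix, of_apply,
    transpose_apply]
  have hcoeff : finExponent d V ((Equiv.piEquivPiSubtypeProd (· ∈ T) _).symm (a, b)) =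
      Finsupp.equivFunOnFinite.symm fun t => if h : t ∈ T then (a ⟨t, h⟩ : ℕ) else b ⟨t, h⟩ := by
    ext t; by_cases h : t ∈ T <;> simp [h]
  have hnot (t : {x // x ∉ T}) : (t : V) ∈ T ↔ False := iff_false_intro t.2
  simp only [hcoeff, Finset.coe_mem, dite_true, Subtype.coe_eta, hnot, dite_false]
  rw [← mul_assoc, mul_comm (coeff _ f)]
  -- the products over `T` carry two different `Fintype` instances (on `↥T` and on the subtype)
  congr!

end EvalMatrix

section EvalMatrixRank

variable {F : Type*} [Field F] {V : Type*} [Fintype V] [DecidableEq V]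
  {f : MvPolynomial V F} {d : ℕ} (hf : IndivDegLE f d) (T : Finset V)
include hf

lemma rank_evalMatrix_le {ι κ : Type*} [Fintype κ] (α : ι → {x // x ∈ T} → F)
    (β : κ → {x // x ∉ T} → F) : (evalMatrix f T α β).rank ≤ (nisanMatrix d f T).rank := by
  rw [evalMatrix_eq_mul_nisanMatrix_mul hf]
  exact (rank_mul_le_left _ _).trans (rank_mul_le_right _ _)

lemma det_evalMatrix_eq_zero_of_rank_le {w : ℕ} (hw : (nisanMatrix d f T).rank ≤ w)
    (α : Fin (w + 1) → {x // x ∈ T} → F) (β : Fin (w + 1) → {x // x ∉ T} → F) :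
    (evalMatrix f T α β).det = 0 :=
  det_eq_zero_of_rank_lt <| by
    rw [Fintype.card_fin]
    exact Nat.lt_succ_of_le ((rank_evalMatrix_le hf T α β).trans hw)

lemma rank_evalMatrix_grid (S : Finset F) (hS : d + 1 ≤ S.card) :
    (evalMatrix f T (fun (x : {x // x ∈ T} → S) t => (x t : F))
      (fun (y : {x // x ∉ T} → S) t => (y t : F))).rank = (nisanMatrix d f T).rank := by
  rw [evalMatrix_eq_mul_nisanMatrix_mul hf, Matrix.mul_assoc,
    rank_mul_eq_right_of_mulVec_injective (multiVandermonde_mulVec_injective S hS),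
    rank_mul_transpose_eq_left_of_mulVec_injective (multiVandermonde_mulVec_injective S hS)]

lemma exists_det_evalMatrix_ne_zero (S : Finset F) (hS : d + 1 ≤ S.card) {k : ℕ}
    (hk : k ≤ (nisanMatrix d f T).rank) :
    ∃ (α : Fin k → {x // x ∈ T} → S) (β : Fin k → {x // x ∉ T} → S),
      (evalMatrix f T (fun i t => (α i t : F)) (fun j t => (β j t : F))).det ≠ 0 :=
  exists_submatrix_det_ne_zero_of_le_rank _ (hk.trans (rank_evalMatrix_grid hf T S hS).ge)

end EvalMatrixRank

section DetPoly

variable {F : Type*} [Field F] {V : Type*} [DecidableEq V]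

def splitVar (T : Finset V) {ι κ : Type*} (i : ι) (j : κ) (t : V) :
    (ι × {x // x ∈ T}) ⊕ (κ × {x // x ∉ T}) :=
  if h : t ∈ T then .inl (i, ⟨t, h⟩) else .inr (j, ⟨t, h⟩)

/-- `det Ê` as a polynomial in the coordinates of the `k` row and `k` column sample points. -/
noncomputable def detPoly (f : MvPolynomial V F) (T : Finset V) (k : ℕ) :
    MvPolynomial ((Fin k × {x // x ∈ T}) ⊕ (Fin k × {x // x ∉ T})) F :=
  (Matrix.of fun i j => rename (splitVar T i j) f).det

lemma eval_detPoly (f : MvPolynomial V F) (T : Finset V) {k : ℕ}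
    (x : (Fin k × {x // x ∈ T}) ⊕ (Fin k × {x // x ∉ T}) → F) :
    eval x (detPoly f T k) =
      (evalMatrix f T (fun i t => x (.inl (i, t))) (fun j t => x (.inr (j, t)))).det := by
  rw [detPoly, RingHom.map_det]
  congr
  ext i j
  simp [eval_rename, evalMatrix, splitVar, Function.comp_def, apply_dite x]

lemma totalDegree_detPoly_le [Fintype V] {f : MvPolynomial V F} {d : ℕ} (hf : IndivDegLE f d)
    (T : Finset V) (k : ℕ) : (detPoly f T k).totalDegree ≤ k * (Fintype.card V * d) := by
  simpa [detPoly] using totalDegree_det_le (Matrix.of fun i j : Fin k => rename (splitVar T i j) f)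
    fun i j => (totalDegree_rename_le (splitVar T i j) f).trans (totalDegree_le_of_indivDegLE hf)

end DetPoly

/-- **Estimating Nisan rank using PIT.** Draw `w + 1` random row-tuples `α_i ∈ S^T` and `w + 1`
random column-tuples `β_j ∈ S^{[n]∖T}` (all coordinates independent and uniform on the finite set
`S`, `|S| ≥ d + 1`), and let `Ê[i,j] = f(x_T = α_i, x_{[n]∖T} = β_j)`.
(1) If `rank M_T(f) ≤ w`, then `det Ê = 0` with probability `1` (i.e. always); and
(2) if `rank M_T(f) > w`, then `Pr[det Ê = 0] ≤ n·d·(w+1)²/|S|`. -/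
theorem rank_estimation_from_PIT {F : Type*} [Field F] {n d w : ℕ}
    (S : Finset F) (hS : d + 1 ≤ S.card)
    (f : MvPolynomial (Fin n) F) (hf : IndivDegLE f d) (T : Finset (Fin n)) :
    ((nisanMatrix d f T).rank ≤ w →
      ∀ ω : (Fin (w + 1) → {x : Fin n // x ∈ T} → {a // a ∈ S}) ×
            (Fin (w + 1) → {x : Fin n // x ∉ T} → {a // a ∈ S}),
        Matrix.det (Matrix.of fun i j : Fin (w + 1) =>
          MvPolynomial.eval
            (fun t => if h : t ∈ T then (ω.1 i ⟨t, h⟩ : F) else (ω.2 j ⟨t, h⟩ : F)) f) = 0) ∧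
    (w < (nisanMatrix d f T).rank →
      (Nat.card {ω : (Fin (w + 1) → {x : Fin n // x ∈ T} → {a // a ∈ S}) ×
            (Fin (w + 1) → {x : Fin n // x ∉ T} → {a // a ∈ S}) //
          Matrix.det (Matrix.of fun i j : Fin (w + 1) =>
            MvPolynomial.eval
              (fun t => if h : t ∈ T then (ω.1 i ⟨t, h⟩ : F) else (ω.2 j ⟨t, h⟩ : F)) f) = 0} : ℝ)
        / (Nat.card ((Fin (w + 1) → {x : Fin n // x ∈ T} → {a // a ∈ S}) ×
            (Fin (w + 1) → {x : Fin n // x ∉ T} → {a // a ∈ S})) : ℝ)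
        ≤ (n * d * (w + 1) ^ 2 : ℝ) / (S.card : ℝ)) := by
  refine ⟨fun hw ω => det_evalMatrix_eq_zero_of_rank_le hf T hw (fun i t => ω.1 i t)
    (fun j t => ω.2 j t), fun hw => ?_⟩
  obtain ⟨α, β, hdet⟩ := exists_det_evalMatrix_ne_zero hf T S hS (Nat.succ_le_of_lt hw)
  have hP : detPoly f T (w + 1) ≠ 0 := fun h0 => hdet <| by
    simpa [h0] using
      (eval_detPoly f T (Sum.elim (fun p => (α p.1 p.2 : F)) fun p => (β p.1 p.2 : F))).symm
  let e : ((Fin (w + 1) × {x // x ∈ T}) ⊕ (Fin (w + 1) × {x // x ∉ T}) → S) ≃ _ :=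
    (Equiv.sumArrowEquivProdArrow _ _ _).trans ((Equiv.curry _ _ _).prodCongr (Equiv.curry _ _ _))
  rw [← Nat.card_congr e, ← Nat.card_congr (e.subtypeEquiv
    (p := fun x => eval (fun v => (x v : F)) (detPoly f T (w + 1)) = 0) fun x => by
      rw [eval_detPoly]; rfl)]
  refine (schwartz_zippel_totalDegree_fintype hP S).trans
    (div_le_div_of_nonneg_right ?_ (Nat.cast_nonneg _))
  have hdeg := totalDegree_detPoly_le hf T (w + 1)
  rw [Fintype.card_fin, mul_comm] at hdeg
  exact_mod_cast hdeg.trans (Nat.mul_le_mul_left _ (Nat.le_self_pow two_ne_zero _))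
end
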